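/- Let u be a continuously differentiable real-valued function on [a,b], with interface values u(a) = g⁻ and a right trace value g⁺ at a. If v > 0, then the single-cell upwind contribution −∫_a^b v u(x) u'(x) dx − v g⁻ (g⁺ − g⁻), when summed over a periodic partition of cells, equals Σ_interfaces (|v|/2)(jump of u)². -/

import Mathlib

/-!
Since `u u' = (u²/2)'`, each cell integral telescopes to `v/2 (u(b)² - u(a)²)`. Adding the
upwind flux term and completing the square, each interface contributes
`v/2 (g⁺)² - v/2 (g⁻)² - v/2 [u]²`, where `g⁻` is the left trace `u_{i-1}(b_{i-1})` and
`g⁺` the right trace `u_i(a_i)`; on the periodic mesh the squared traces cancel in the sum.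
-/

theorem integral_const_mul_self_mul_deriv {u : ℝ → ℝ} (hu : ContDiff ℝ 1 u) (c a b : ℝ) :
    ∫ x in a..b, c * u x * deriv u x = c / 2 * u b ^ 2 - c / 2 * u a ^ 2 := by
  have hderiv : ∀ x, HasDerivAt (fun y => c / 2 * u y ^ 2) (c * u x * deriv u x) x := fun x =>
    (((hu.differentiable one_ne_zero x).hasDerivAt.fun_pow 2).const_mul (c / 2)).congr_deriv
      (by push_cast; ring)
  have hcont : Continuous fun x => c * u x * deriv u x :=
    (continuous_const.mul hu.continuous).mul (hu.continuous_deriv le_rfl)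
  exact intervalIntegral.integral_eq_sub_of_hasDerivAt (fun x _ => hderiv x)
    (hcont.intervalIntegrable a b)

theorem Fintype.sum_sub_comp_sub_eq_zero {G M : Type*} [AddGroup G] [Fintype G]
    [AddCommGroup M] (f : G → M) (g : G) :
    ∑ i, (f i - f (i - g)) = 0 := by
  rw [Finset.sum_sub_distrib, sub_eq_zero]
  exact (Fintype.sum_equiv (Equiv.subRight g) _ _ fun _ => rfl).symm

theorem upwind_cell_identity {v : ℝ} (hv : 0 ≤ v) (gm gp ub : ℝ) :
    v / 2 * ub ^ 2 - v / 2 * gp ^ 2 + v * gm * (gp - gm) + |v| / 2 * (gp - gm) ^ 2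
      = v / 2 * ub ^ 2 - v / 2 * gm ^ 2 := by
  rw [abs_of_nonneg hv]
  ring

theorem stmt13_general {N : ℕ} [NeZero N] (v : ℝ) (hv : 0 < v)
    (a b : ZMod N → ℝ)
    (u : ZMod N → ℝ → ℝ) (hu : ∀ i, ContDiff ℝ 1 (u i)) :
    -∑ i : ZMod N, ((∫ x in a i..b i, v * u i x * deriv (u i) x) +
        v * u (i - 1) (b (i - 1)) * (u i (a i) - u (i - 1) (b (i - 1)))) =
      ∑ i : ZMod N, |v| / 2 * (u i (a i) - u (i - 1) (b (i - 1))) ^ 2 := by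
  simp only [integral_const_mul_self_mul_deriv (hu _)]
  rw [neg_eq_iff_add_eq_zero, ← Finset.sum_add_distrib]
  simp only [upwind_cell_identity hv.le]
  exact Fintype.sum_sub_comp_sub_eq_zero (fun i => v / 2 * u i (b i) ^ 2) 1

theorem stmt13 {N : ℕ} [NeZero N] (v : ℝ) (hv : 0 < v)
    (a b : ZMod N → ℝ) (hab : ∀ i, a i < b i)
    (u : ZMod N → ℝ → ℝ) (hu : ∀ i, ContDiff ℝ 1 (u i)) :
    -∑ i : ZMod N, ((∫ x in a i..b i, v * u i x * deriv (u i) x) +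
        v * u (i - 1) (b (i - 1)) * (u i (a i) - u (i - 1) (b (i - 1)))) =
      ∑ i : ZMod N, |v| / 2 * (u i (a i) - u (i - 1) (b (i - 1))) ^ 2 :=
  stmt13_general v hv a b u hu
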